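/- Let A be a bounded pseudo-BCK algebra. (1) If M is a Bosbach state on A, then m = 1 − M is a state-measure on A. (2) If m is a state-measure on A, then M = 1 − m is a Bosbach state on A. -/
import Mathlib


universe u

class PseudoBCK (A : Type u) extends PartialOrder A where
  arr : A → A → A
  sarr : A → A → A
  one : A
  ax1  : ∀ x y z : A, arr x y ≤ sarr (arr y z) (arr x z)
  ax1' : ∀ x y z : A, sarr x y ≤ arr (sarr y z) (sarr x z)
  ax2  : ∀ x y : A, x ≤ sarr (arr x y) y
  ax2' : ∀ x y : A, x ≤ arr (sarr x y) y
  ax4  : ∀ x : A, x ≤ one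
  ax6  : ∀ x y : A, x ≤ y ↔ arr x y = one
  ax6' : ∀ x y : A, x ≤ y ↔ sarr x y = one

namespace PseudoBCK

variable {A : Type u} [PseudoBCK A]

/-- `x ∨₁ y = (x → y) ⤳ y`. -/
def sup1 (x y : A) : A := sarr (arr x y) y

/-- `x ∨₂ y = (x ⤳ y) → y`. -/
def sup2 (x y : A) : A := arr (sarr x y) y

end PseudoBCK

open PseudoBCK

class BoundedPseudoBCK (A : Type u) extends PseudoBCK A where
  zero : A
  zero_le : ∀ x : A, zero ≤ x

namespace BoundedPseudoBCK

variable {A : Type u} [BoundedPseudoBCK A]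

/-- `x⁻ = x → 0`. -/
def neg (x : A) : A := arr x zero

/-- `x˜ = x ⤳ 0`. -/
def tneg (x : A) : A := sarr x zero

end BoundedPseudoBCK

open BoundedPseudoBCK

/-- A Bosbach state on a bounded pseudo-BCK algebra. -/
def IsBosbachState (A : Type u) [BoundedPseudoBCK A] (s : A → ℝ) : Prop :=
  (∀ x : A, s x ∈ Set.Icc (0 : ℝ) 1) ∧
  s (zero : A) = 0 ∧ s (one : A) = 1 ∧
  (∀ x y : A, s x + s (arr x y) = s y + s (arr y x)) ∧
  (∀ x y : A, s x + s (sarr x y) = s y + s (sarr y x))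

/-- A measure on a pseudo-BCK algebra: a nonnegative map with
`m (x → y) = m (x ⤳ y) = m y - m x` whenever `y ≤ x`. -/
def IsMeasure (A : Type u) [PseudoBCK A] (m : A → ℝ) : Prop :=
  (∀ x : A, 0 ≤ m x) ∧
  ∀ x y : A, y ≤ x → m (arr x y) = m y - m x ∧ m (sarr x y) = m y - m x

/-- A state-measure on a bounded pseudo-BCK algebra: a measure with `m 0 = 1`. -/
def IsStateMeasure (A : Type u) [BoundedPseudoBCK A] (m : A → ℝ) : Prop :=
  IsMeasure A m ∧ m (zero : A) = 1

section Aux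

variable {A : Type u} [PseudoBCK A]

lemma arr_antitone {x z : A} (h : x ≤ z) (y : A) : arr z y ≤ arr x y := by
  have h1 : arr x z = one := (ax6 x z).mp h
  have h2 := ax1 x z y
  rw [h1] at h2
  exact (ax6' _ _).mpr (le_antisymm (ax4 _) h2)

lemma sarr_antitone {x z : A} (h : x ≤ z) (y : A) : sarr z y ≤ sarr x y := by
  have h1 : sarr x z = one := (ax6' x z).mp h
  have h2 := ax1' x z y
  rw [h1] at h2
  exact (ax6 _ _).mpr (le_antisymm (ax4 _) h2)

lemma le_arr (x y : A) : y ≤ arr x y := by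
  have h1 : sarr y y = one := (ax6' y y).mp le_rfl
  have h2 : y ≤ arr one y := by have := ax2' y y; rwa [h1] at this
  exact h2.trans (arr_antitone (ax4 x) y)

lemma le_sarr (x y : A) : y ≤ sarr x y := by
  have h1 : arr y y = one := (ax6 y y).mp le_rfl
  have h2 : y ≤ sarr one y := by have := ax2 y y; rwa [h1] at this
  exact h2.trans (sarr_antitone (ax4 x) y)

lemma m_antitone {m : A → ℝ} (hm : IsMeasure A m) {a b : A} (h : a ≤ b) :
    m b ≤ m a := by
  have h1 := (hm.2 b a h).1
  have h2 := hm.1 (arr b a)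
  linarith

lemma m_one {m : A → ℝ} (hm : IsMeasure A m) : m (one : A) = 0 := by
  have h1 := (hm.2 (one : A) one le_rfl).1
  have h2 : arr (one : A) one = one := (ax6 (one : A) one).mp le_rfl
  rw [h2] at h1
  linarith

/-- Key inequality: `m y + m (y→x) ≤ m x + m (x→y)` for any measure. -/
lemma key_arr {m : A → ℝ} (hm : IsMeasure A m) (x y : A) :
    m y + m (arr y x) ≤ m x + m (arr x y) := by
  set p := arr x y with hp
  set s := sarr p y with hs
  have hyp : y ≤ p := le_arr x y
  have hys : y ≤ s := le_sarr p y
  have hxs : x ≤ s := ax2 x y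
  have h1 : m s = m y - m p := (hm.2 p y hyp).2
  have h2 : m (arr s x) = m x - m s := (hm.2 s x hxs).1
  have h3 : arr s x ≤ arr y x := arr_antitone hys x
  have h4 : m (arr y x) ≤ m (arr s x) := m_antitone hm h3
  linarith

lemma key_sarr {m : A → ℝ} (hm : IsMeasure A m) (x y : A) :
    m y + m (sarr y x) ≤ m x + m (sarr x y) := by
  set p := sarr x y with hp
  set s := arr p y with hs
  have hyp : y ≤ p := le_sarr x y
  have hys : y ≤ s := le_arr p y
  have hxs : x ≤ s := ax2' x y
  have h1 : m s = m y - m p := (hm.2 p y hyp).1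
  have h2 : m (sarr s x) = m x - m s := (hm.2 s x hxs).2
  have h3 : sarr s x ≤ sarr y x := sarr_antitone hys x
  have h4 : m (sarr y x) ≤ m (sarr s x) := m_antitone hm h3
  linarith

end Aux

theorem stmt_15 {A : Type u} [BoundedPseudoBCK A] :
    (∀ M : A → ℝ, IsBosbachState A M → IsStateMeasure A (fun x => 1 - M x)) ∧
    (∀ m : A → ℝ, IsStateMeasure A m → IsBosbachState A (fun x => 1 - m x)) := by
  constructor
  · rintro M ⟨hIcc, h0, h1, harr, hsarr⟩
    refine ⟨⟨fun x => by have := (hIcc x).2; simp; linarith, ?_⟩, by simp [h0]⟩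
    intro x y hyx
    have hyx1 : arr y x = one := (ax6 y x).mp hyx
    have hyx2 : sarr y x = one := (ax6' y x).mp hyx
    have e1 := harr x y
    have e2 := hsarr x y
    rw [hyx1, h1] at e1
    rw [hyx2, h1] at e2
    constructor <;> simp <;> linarith
  · rintro m ⟨hm, h0⟩
    have hm1 : m (one : A) = 0 := m_one hm
    refine ⟨fun x => ⟨?_, ?_⟩, by simp [h0], by simp [hm1], ?_, ?_⟩
    · have hx : m x ≤ m (zero : A) := m_antitone hm (zero_le x)
      simp only
      rw [h0] at hx
      linarith
    · have := hm.1 x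
      simp only
      linarith
    · intro x y
      have h1 := key_arr hm x y
      have h2 := key_arr hm y x
      simp only
      linarith
    · intro x y
      have h1 := key_sarr hm x y
      have h2 := key_sarr hm y x
      simp only
      linarith
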